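/- arXiv:2505.10891 — 2 statements merged into one kernel-verified Lean document; each statement's English description precedes it below -/
import Mathlib

section
/- Let ω(z) = Σ_{n≥1} cₙ zⁿ be a Schwarz function (analytic on the unit disk with ω(0)=0 and |ω(z)| ≤ 1). If |σ| ≤ 2 and μ ≥ 1, then |c₃ + σ c₁ c₂ + μ c₁³| ≤ μ. -/
/-!
Schur's algorithm. Write `w(z) = z g(z)`; by the Schwarz lemma `g` is again a self-map of the
disk, with `g(0) = c₁`, `g'(0) = c₂`, and `c₃` the derivative at `0` of `(g(z) - g(0)) / z`.
One Schur step (compose `g` with the disk automorphism sending `c₁` to `0`, divide by `z`) gives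
another self-map `h`; with `ζ = h(0)`, `η = h'(0)` this yields
`c₂ = (1 - |c₁|²) ζ`, `c₃ = (1 - |c₁|²)(η - c̄₁ ζ²)`, and Schwarz–Pick for `h` gives
`|η| ≤ 1 - |ζ|²` (if `|c₁| = 1`, `g` is constant and `c₂ = c₃ = 0`). Hence
`|c₃ + σ c₁ c₂ + μ c₁³| ≤ (1 - |c₁|²)(1 - |ζ|²) + |E|`, where `E` is a cubic in `c₁, ζ`,
and `|E|² ≤ (μ - (1 - |c₁|²)(1 - |ζ|²))²` is a polynomial inequality in `|c₁|²`, `|ζ|²` and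
`Re (c̄₁² ζ)`, concave in the last variable.
-/

open Complex Metric

noncomputable section

/-- A Schwarz function: analytic self-map of the unit disk fixing 0. -/
def IsSchwarz (w : ℂ → ℂ) : Prop :=
  DifferentiableOn ℂ w (ball (0:ℂ) 1) ∧ w 0 = 0 ∧ ∀ z ∈ ball (0:ℂ) 1, w z ∈ ball (0:ℂ) 1

/-- `f` belongs to the class `𝒜` with Taylor coefficients `a`:
`f z = z + a₂ z² + a₃ z³ + ⋯` on the unit disk. -/
def InClassA (f : ℂ → ℂ) (a : ℕ → ℂ) : Prop :=
  a 0 = 0 ∧ a 1 = 1 ∧ ∀ z ∈ ball (0:ℂ) 1, HasSum (fun n => a n * z ^ n) (f z)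

/-- `f ∈ 𝒮*(φ)`, i.e. `z f'(z)/f(z) ≺ φ(z)`, written without division. -/
def MemStarPhi (phi f : ℂ → ℂ) : Prop :=
  ∃ w, IsSchwarz w ∧ ∀ z ∈ ball (0:ℂ) 1, z * deriv f z = phi (w z) * f z

/-- `f ∈ 𝒞(φ)`, i.e. `1 + z f''(z)/f'(z) ≺ φ(z)`, written without division. -/
def MemConvexPhi (phi f : ℂ → ℂ) : Prop :=
  ∃ w, IsSchwarz w ∧ ∀ z ∈ ball (0:ℂ) 1,
    deriv f z + z * deriv (deriv f) z = phi (w z) * deriv f z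

/-- `φ` is a Ma–Minda function with (real) Taylor coefficients `B`:
analytic, univalent, `φ(0) = 1`, `B₁ > 0`, image in the right half-plane,
symmetric about the real axis, and starlike with respect to `1`. -/
def IsMaMinda (phi : ℂ → ℂ) (B : ℕ → ℝ) : Prop :=
  DifferentiableOn ℂ phi (ball (0:ℂ) 1) ∧ Set.InjOn phi (ball (0:ℂ) 1) ∧
  (∀ z ∈ ball (0:ℂ) 1, HasSum (fun n => (B n : ℂ) * z ^ n) (phi z)) ∧
  B 0 = 1 ∧ 0 < B 1 ∧ (∀ z ∈ ball (0:ℂ) 1, 0 < (phi z).re) ∧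
  (∀ z ∈ ball (0:ℂ) 1, phi ((starRingEnd ℂ) z) = (starRingEnd ℂ) (phi z)) ∧
  StarConvex ℝ (1 : ℂ) (phi '' ball (0:ℂ) 1)

/-- `f` is starlike of order `α` (univalent, normalized analyticity is stated separately). -/
def IsStarlikeOfOrder (f : ℂ → ℂ) (α : ℝ) : Prop :=
  DifferentiableOn ℂ f (ball (0:ℂ) 1) ∧ Set.InjOn f (ball (0:ℂ) 1) ∧
  ∀ z ∈ ball (0:ℂ) 1, z ≠ 0 → α < (z * deriv f z / f z).re

/-- `f` is a convex function. -/
def IsConvexFun (f : ℂ → ℂ) : Prop :=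
  DifferentiableOn ℂ f (ball (0:ℂ) 1) ∧ Set.InjOn f (ball (0:ℂ) 1) ∧
  ∀ z ∈ ball (0:ℂ) 1, 0 < (1 + z * deriv (deriv f) z / deriv f z).re

/-- First logarithmic coefficient of the inverse, in terms of the coefficients of `f`. -/
def G₁ (a : ℕ → ℂ) : ℂ := -(a 2) / 2
/-- Second logarithmic coefficient of the inverse. -/
def G₂ (a : ℕ → ℂ) : ℂ := -(1/2) * (a 3 - (3/2) * a 2 ^ 2)
/-- Third logarithmic coefficient of the inverse. -/
def G₃ (a : ℕ → ℂ) : ℂ := -(1/2) * (a 4 - 4 * a 2 * a 3 + (10/3) * a 2 ^ 3)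
/-- Second Taylor coefficient of the inverse function. -/
def bc₂ (a : ℕ → ℂ) : ℂ := -(a 2)
/-- Third Taylor coefficient of the inverse function. -/
def bc₃ (a : ℕ → ℂ) : ℂ := 2 * a 2 ^ 2 - a 3
/-- Fourth Taylor coefficient of the inverse function. -/
def bc₄ (a : ℕ → ℂ) : ℂ := -5 * a 2 ^ 3 + 5 * a 2 * a 3 - a 4

/-- Region `Ω₁` of Prokhorov–Szynal. -/
def Omega1 (s m : ℝ) : Prop := |s| ≤ 2 ∧ 1 ≤ m
/-- Region `Ω₂` of Prokhorov–Szynal. -/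
def Omega2 (s m : ℝ) : Prop := 2 ≤ |s| ∧ |s| ≤ 4 ∧ (s ^ 2 + 8) / 12 ≤ m
/-- Region `Ω₃` of Prokhorov–Szynal. -/
def Omega3 (s m : ℝ) : Prop := 4 ≤ |s| ∧ (2/3) * (|s| - 1) ≤ m

open Set Filter Topology ComplexConjugate FormalMultilinearSeries

theorem hasFPowerSeriesOnBall_ofScalars {f : ℂ → ℂ} {c : ℕ → ℂ} {r : NNReal} (hr : 0 < r)
    (h : ∀ z ∈ ball (0:ℂ) r, HasSum (fun n => c n * z ^ n) (f z)) :
    HasFPowerSeriesOnBall f (ofScalars ℂ c) 0 r where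
  r_le := ENNReal.le_of_forall_nnreal_lt fun t ht => by
    refine le_radius_of_summable_norm _ ?_
    have hz : (t : ℂ) ∈ ball (0:ℂ) r := by simpa using ht
    simpa using summable_norm_iff.mpr (h t hz).summable
  r_pos := by exact_mod_cast hr
  hasSum {y} hy := by
    rw [Metric.eball_coe] at hy
    simpa [ofScalars_apply_eq, mul_comm] using h y hy

theorem mapsTo_dslope_zero {f : ℂ → ℂ} (hf : DifferentiableOn ℂ f (ball 0 1))
    (hmaps : MapsTo f (ball 0 1) (closedBall 0 1)) (h0 : f 0 = 0) :
    MapsTo (dslope f 0) (ball 0 1) (closedBall 0 1) := fun z hz => by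
  have hmaps' : MapsTo f (ball 0 1) (closedBall (f 0) 1) := by rwa [h0]
  simpa using Complex.norm_dslope_le_div_of_mapsTo_ball hf hmaps' hz

theorem IsSchwarz.mapsTo_dslope {w : ℂ → ℂ} (hw : IsSchwarz w) :
    MapsTo (dslope w 0) (ball 0 1) (closedBall 0 1) :=
  mapsTo_dslope_zero hw.1 (fun z hz => ball_subset_closedBall (hw.2.2 z hz)) hw.2.1

theorem dslope_eventuallyEq_zero_of_eventuallyEq_const {𝕜 E : Type*} [NontriviallyNormedField 𝕜]
    [NormedAddCommGroup E] [NormedSpace 𝕜 E] {f : 𝕜 → E} {a : 𝕜} (h : f =ᶠ[𝓝 a] fun _ => f a) :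
    dslope f a =ᶠ[𝓝 a] 0 := by
  filter_upwards [h] with z hz
  rcases eq_or_ne z a with rfl | hne
  · rw [dslope_same, h.deriv_eq, deriv_const, Pi.zero_apply]
  · rw [dslope_of_ne _ hne, slope, hz, vsub_self, smul_zero, Pi.zero_apply]

theorem norm_sub_le_norm_one_sub_conj_mul {a w : ℂ} (ha : ‖a‖ ≤ 1) (hw : ‖w‖ ≤ 1) :
    ‖w - a‖ ≤ ‖1 - conj a * w‖ := by
  have key : ‖1 - conj a * w‖ ^ 2 - ‖w - a‖ ^ 2 = (1 - ‖a‖ ^ 2) * (1 - ‖w‖ ^ 2) := by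
    simp only [Complex.sq_norm, Complex.normSq_apply, Complex.sub_re, Complex.sub_im,
      Complex.mul_re, Complex.mul_im, Complex.one_re, Complex.one_im, Complex.conj_re,
      Complex.conj_im]
    ring
  have hprod : 0 ≤ (1 - ‖a‖ ^ 2) * (1 - ‖w‖ ^ 2) :=
    mul_nonneg (sub_nonneg.mpr (pow_le_one₀ (norm_nonneg a) ha))
      (sub_nonneg.mpr (pow_le_one₀ (norm_nonneg w) hw))
  exact (pow_le_pow_iff_left₀ (norm_nonneg _) (norm_nonneg _) two_ne_zero).mp (by linarith)

theorem one_sub_conj_mul_ne_zero {a w : ℂ} (ha : ‖a‖ < 1) (hw : ‖w‖ ≤ 1) :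
    1 - conj a * w ≠ 0 := by
  have hlt : ‖conj a * w‖ < 1 := by
    rw [norm_mul, Complex.norm_conj]
    exact lt_of_le_of_lt (mul_le_of_le_one_right (norm_nonneg a) hw) ha
  rw [sub_ne_zero]
  rintro h
  rw [← h, norm_one] at hlt
  exact lt_irrefl _ hlt

def mobius (a w : ℂ) : ℂ := (w - a) / (1 - conj a * w)

theorem norm_mobius_le_one {a w : ℂ} (ha : ‖a‖ ≤ 1) (hw : ‖w‖ ≤ 1) : ‖mobius a w‖ ≤ 1 := by
  rw [mobius, norm_div]
  exact div_le_one_of_le₀ (norm_sub_le_norm_one_sub_conj_mul ha hw) (norm_nonneg _)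

/-- One step of the Schur algorithm: `g = (g 0 + z h) / (1 + conj (g 0) z h)` with
`h = schurStep g`. -/
def schurStep (g : ℂ → ℂ) : ℂ → ℂ := dslope (fun z => mobius (g 0) (g z)) 0

section SchurStep

variable {g : ℂ → ℂ}

theorem differentiableOn_mobius_comp (hg : DifferentiableOn ℂ g (ball 0 1))
    (hmaps : MapsTo g (ball 0 1) (closedBall 0 1)) (hg0 : ‖g 0‖ < 1) :
    DifferentiableOn ℂ (fun z => mobius (g 0) (g z)) (ball 0 1) :=
  (hg.sub_const _).div ((differentiableOn_const _).sub ((differentiableOn_const _).mul hg))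
    fun _ hz => one_sub_conj_mul_ne_zero hg0 (mem_closedBall_zero_iff.mp (hmaps hz))

theorem differentiableOn_schurStep (hg : DifferentiableOn ℂ g (ball 0 1))
    (hmaps : MapsTo g (ball 0 1) (closedBall 0 1)) (hg0 : ‖g 0‖ < 1) :
    DifferentiableOn ℂ (schurStep g) (ball 0 1) :=
  (differentiableOn_dslope (ball_mem_nhds 0 one_pos)).mpr
    (differentiableOn_mobius_comp hg hmaps hg0)

theorem mapsTo_schurStep (hg : DifferentiableOn ℂ g (ball 0 1))
    (hmaps : MapsTo g (ball 0 1) (closedBall 0 1)) (hg0 : ‖g 0‖ < 1) :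
    MapsTo (schurStep g) (ball 0 1) (closedBall 0 1) :=
  mapsTo_dslope_zero (differentiableOn_mobius_comp hg hmaps hg0)
    (fun _ hz => mem_closedBall_zero_iff.mpr
      (norm_mobius_le_one hg0.le (mem_closedBall_zero_iff.mp (hmaps hz))))
    (by simp [mobius])

theorem schurStep_mul_eventuallyEq (hg : DifferentiableOn ℂ g (ball 0 1))
    (hmaps : MapsTo g (ball 0 1) (closedBall 0 1)) (hg0 : ‖g 0‖ < 1) :
    (fun z => schurStep g z * (1 - conj (g 0) * g z)) =ᶠ[𝓝 0] dslope g 0 := by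
  have hball : ball (0:ℂ) 1 ∈ 𝓝 0 := ball_mem_nhds 0 one_pos
  have hcont : ContinuousAt (fun z => schurStep g z * (1 - conj (g 0) * g z)) 0 :=
    ((differentiableOn_schurStep hg hmaps hg0).continuousOn.continuousAt hball).mul
      (continuousAt_const.sub (continuousAt_const.mul (hg.continuousOn.continuousAt hball)))
  rw [← hcont.eventuallyEq_nhds_iff_eventuallyEq_nhdsNE
    (continuousAt_dslope_same.mpr (hg.differentiableAt hball))]
  filter_upwards [self_mem_nhdsWithin, mem_nhdsWithin_of_mem_nhds hball] with z hz0 hz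
  have hden := one_sub_conj_mul_ne_zero hg0 (mem_closedBall_zero_iff.mp (hmaps hz))
  rw [schurStep, dslope_of_ne _ hz0, dslope_of_ne _ hz0, slope_def_field, slope_def_field]
  simp only [mobius, sub_self, zero_div, sub_zero]
  rw [div_right_comm, div_mul_cancel₀ _ hden]

theorem eventuallyEq_const_of_norm_eq_one (hg : DifferentiableOn ℂ g (ball 0 1))
    (hmaps : MapsTo g (ball 0 1) (closedBall 0 1)) (hg0 : ‖g 0‖ = 1) :
    g =ᶠ[𝓝 0] fun _ => g 0 := by
  have hball : ball (0:ℂ) 1 ∈ 𝓝 0 := ball_mem_nhds 0 one_pos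
  refine Complex.eventually_eq_of_isLocalMax_norm ?_ ?_
  · filter_upwards [hball] with z hz using hg.differentiableAt (isOpen_ball.mem_nhds hz)
  · filter_upwards [hball] with z hz
    simpa [hg0] using hmaps hz

theorem schurStep_zero_mul (hg : DifferentiableOn ℂ g (ball 0 1))
    (hmaps : MapsTo g (ball 0 1) (closedBall 0 1)) (hg0 : ‖g 0‖ < 1) :
    schurStep g 0 * ((1 - ‖g 0‖ ^ 2 : ℝ) : ℂ) = deriv g 0 := by
  have h := (schurStep_mul_eventuallyEq hg hmaps hg0).eq_of_nhds
  rw [dslope_same, Complex.conj_mul'] at h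
  push_cast
  exact h

theorem norm_deriv_le_one_sub_sq (hg : DifferentiableOn ℂ g (ball 0 1))
    (hmaps : MapsTo g (ball 0 1) (closedBall 0 1)) :
    ‖deriv g 0‖ ≤ 1 - ‖g 0‖ ^ 2 := by
  rcases (mem_closedBall_zero_iff.mp (hmaps (mem_ball_self one_pos))).lt_or_eq with hg0 | hg0
  · have hν : 0 ≤ 1 - ‖g 0‖ ^ 2 := sub_nonneg.mpr (pow_le_one₀ (norm_nonneg _) hg0.le)
    rw [← schurStep_zero_mul hg hmaps hg0, norm_mul, Complex.norm_real, Real.norm_of_nonneg hν]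
    exact mul_le_of_le_one_left hν
      (mem_closedBall_zero_iff.mp (mapsTo_schurStep hg hmaps hg0 (mem_ball_self one_pos)))
  · have h := dslope_eventuallyEq_zero_of_eventuallyEq_const
      (eventuallyEq_const_of_norm_eq_one hg hmaps hg0)
    rw [← dslope_same, h.eq_of_nhds, hg0]
    simp

theorem exists_schur_parameters (hg : DifferentiableOn ℂ g (ball 0 1))
    (hmaps : MapsTo g (ball 0 1) (closedBall 0 1)) :
    ∃ ζ η : ℂ, ‖η‖ ≤ 1 - ‖ζ‖ ^ 2 ∧ deriv g 0 = ((1 - ‖g 0‖ ^ 2 : ℝ) : ℂ) * ζ ∧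
      deriv (dslope g 0) 0 = ((1 - ‖g 0‖ ^ 2 : ℝ) : ℂ) * (η - conj (g 0) * ζ ^ 2) := by
  have hball : ball (0:ℂ) 1 ∈ 𝓝 0 := ball_mem_nhds 0 one_pos
  rcases (mem_closedBall_zero_iff.mp (hmaps (mem_ball_self one_pos))).lt_or_eq with hg0 | hg0
  · have hS := differentiableOn_schurStep hg hmaps hg0
    have hζ := schurStep_zero_mul hg hmaps hg0
    refine ⟨schurStep g 0, deriv (schurStep g) 0,
      norm_deriv_le_one_sub_sq hS (mapsTo_schurStep hg hmaps hg0), by rw [← hζ, mul_comm], ?_⟩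
    have hprod : HasDerivAt (fun z => schurStep g z * (1 - conj (g 0) * g z))
        (deriv (schurStep g) 0 * (1 - conj (g 0) * g 0)
          + schurStep g 0 * -(conj (g 0) * deriv g 0)) 0 :=
      (hS.differentiableAt hball).hasDerivAt.mul
        (((hg.differentiableAt hball).hasDerivAt.const_mul (conj (g 0))).const_sub 1)
    rw [← (schurStep_mul_eventuallyEq hg hmaps hg0).deriv_eq, hprod.deriv, ← hζ,
      Complex.conj_mul']
    push_cast
    ring
  · have h := dslope_eventuallyEq_zero_of_eventuallyEq_const
      (eventuallyEq_const_of_norm_eq_one hg hmaps hg0)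
    refine ⟨0, 0, by simp, ?_, ?_⟩
    · rw [← dslope_same, h.eq_of_nhds, mul_zero, Pi.zero_apply]
    · rw [h.deriv_eq]
      simp [hg0]

end SchurStep

theorem cubic_combination_poly_le (R S t m X : ℝ) (hR0 : 0 ≤ R) (hR1 : R ≤ 1) (hS0 : 0 ≤ S)
    (ht : t ^ 2 ≤ 4) (hm : 1 ≤ m) :
    (1 - R) ^ 2 * R * S ^ 2 + t ^ 2 * (1 - R) ^ 2 * R * S + m ^ 2 * R ^ 3
      - 2 * t * (1 - R) ^ 2 * S * X - 2 * m * (1 - R) * (2 * X ^ 2 - R ^ 2 * S)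
      + 2 * t * (1 - R) * m * R * X ≤ (m - (1 - R) * (1 - S)) ^ 2 := by
  have hm0 : 0 < m := by linarith
  have hR : 0 ≤ 1 - R := by linarith
  have hR3 : 0 ≤ 1 - R ^ 3 := by nlinarith [mul_nonneg hR0 hR0]
  have hP : 0 ≤ m ^ 2 * (1 - R ^ 3) - m * (1 - R) ^ 2 + 2 * m * S * (1 - R) ^ 2 * (1 + R)
      + S ^ 2 * (1 - R) ^ 3 := by
    nlinarith [mul_nonneg (mul_nonneg hm0.le (by linarith : (0:ℝ) ≤ m - 1)) hR3,
      mul_nonneg hm0.le (mul_nonneg (mul_nonneg hR0 hR) (by linarith : (0:ℝ) ≤ 2 + R)),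
      mul_nonneg (mul_nonneg hS0 hm0.le)
        (mul_nonneg (mul_nonneg hR hR) (by linarith : (0:ℝ) ≤ 1 + R)),
      mul_nonneg (mul_nonneg hS0 hS0) (mul_nonneg (mul_nonneg hR hR) hR)]
  have h1 : 0 ≤ (1 - R) * (4 * m * X + t * ((1 - R) * S - m * R)) ^ 2 :=
    mul_nonneg hR (sq_nonneg _)
  have h2 : 0 ≤ (4 - t ^ 2) * (4 * m * (1 - R) ^ 2 * R * S + (1 - R) * ((1 - R) * S - m * R) ^ 2) :=
    mul_nonneg (by linarith) (by positivity)
  have h3 := mul_nonneg (by linarith : (0:ℝ) ≤ 4 * (m - 1)) hP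
  -- completing the square in `X`: `4 m (rhs - lhs)` is exactly the sum of the three terms above
  refine le_of_mul_le_mul_left ?_ (by positivity : (0:ℝ) < 4 * m)
  linear_combination h1 + h2 + h3

theorem sq_norm_cubic_combination (a ζ : ℂ) (σ μ : ℝ) :
    ‖((1 - ‖a‖ ^ 2 : ℝ) : ℂ) * (σ * a * ζ - conj a * ζ ^ 2) + μ * a ^ 3‖ ^ 2
      = (1 - ‖a‖ ^ 2) ^ 2 * ‖a‖ ^ 2 * (‖ζ‖ ^ 2) ^ 2
        + σ ^ 2 * (1 - ‖a‖ ^ 2) ^ 2 * ‖a‖ ^ 2 * ‖ζ‖ ^ 2 + μ ^ 2 * (‖a‖ ^ 2) ^ 3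
        - 2 * σ * (1 - ‖a‖ ^ 2) ^ 2 * ‖ζ‖ ^ 2 * (conj a ^ 2 * ζ).re
        - 2 * μ * (1 - ‖a‖ ^ 2) * (2 * (conj a ^ 2 * ζ).re ^ 2 - (‖a‖ ^ 2) ^ 2 * ‖ζ‖ ^ 2)
        + 2 * σ * (1 - ‖a‖ ^ 2) * μ * ‖a‖ ^ 2 * (conj a ^ 2 * ζ).re := by
  have ha : ‖a‖ ^ 2 = a.re * a.re + a.im * a.im := by rw [Complex.sq_norm, Complex.normSq_apply]
  have hζ : ‖ζ‖ ^ 2 = ζ.re * ζ.re + ζ.im * ζ.im := by rw [Complex.sq_norm, Complex.normSq_apply]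
  rw [ha, hζ, Complex.sq_norm, Complex.normSq_apply]
  simp only [pow_succ, pow_zero, one_mul, Complex.mul_re, Complex.mul_im, Complex.add_re,
    Complex.add_im, Complex.sub_re, Complex.sub_im, Complex.conj_re, Complex.conj_im,
    Complex.ofReal_re, Complex.ofReal_im]
  ring

theorem norm_functional_of_schur_parameters_le {a ζ η : ℂ} {σ μ : ℝ} (ha : ‖a‖ ≤ 1)
    (hη : ‖η‖ ≤ 1 - ‖ζ‖ ^ 2) (hσ : |σ| ≤ 2) (hμ : 1 ≤ μ) :
    ‖((1 - ‖a‖ ^ 2 : ℝ) : ℂ) * (η - conj a * ζ ^ 2) + σ * a * (((1 - ‖a‖ ^ 2 : ℝ) : ℂ) * ζ)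
      + μ * a ^ 3‖ ≤ μ := by
  set E := ((1 - ‖a‖ ^ 2 : ℝ) : ℂ) * (σ * a * ζ - conj a * ζ ^ 2) + μ * a ^ 3
  have hν : 0 ≤ 1 - ‖a‖ ^ 2 := sub_nonneg.mpr (pow_le_one₀ (norm_nonneg a) ha)
  have hE : ‖E‖ ^ 2 ≤ (μ - (1 - ‖a‖ ^ 2) * (1 - ‖ζ‖ ^ 2)) ^ 2 := by
    rw [sq_norm_cubic_combination]
    exact cubic_combination_poly_le _ _ σ μ _ (by positivity) (by linarith) (by positivity)
      (by nlinarith [sq_abs σ, abs_nonneg σ]) hμ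
  have hB : 0 ≤ μ - (1 - ‖a‖ ^ 2) * (1 - ‖ζ‖ ^ 2) := by
    nlinarith [norm_nonneg η, sq_nonneg ‖a‖]
  calc _ = ‖((1 - ‖a‖ ^ 2 : ℝ) : ℂ) * η + E‖ := by congr 1; ring
    _ ≤ (1 - ‖a‖ ^ 2) * ‖η‖ + ‖E‖ := by
      grw [norm_add_le, norm_mul, Complex.norm_real, Real.norm_of_nonneg hν]
    _ ≤ (1 - ‖a‖ ^ 2) * (1 - ‖ζ‖ ^ 2) + (μ - (1 - ‖a‖ ^ 2) * (1 - ‖ζ‖ ^ 2)) := by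
      gcongr
      exact (pow_le_pow_iff_left₀ (norm_nonneg E) hB two_ne_zero).mp hE
    _ = μ := by ring

theorem stmt_2_general (w : ℂ → ℂ) (c : ℕ → ℂ) (σ μ : ℝ)
    (hw : IsSchwarz w)
    (hcsum : ∀ z ∈ ball (0:ℂ) 1, HasSum (fun n => c n * z ^ n) (w z))
    (hσ : |σ| ≤ 2) (hμ : 1 ≤ μ) :
    ‖c 3 + (σ : ℂ) * c 1 * c 2 + (μ : ℂ) * c 1 ^ 3‖ ≤ μ := by
  have hp : HasFPowerSeriesAt (dslope w 0) (ofScalars ℂ c).fslope 0 :=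
    (hasFPowerSeriesOnBall_ofScalars one_pos (by simpa using hcsum)).hasFPowerSeriesAt
      |>.has_fpower_series_dslope_fslope
  have hc1 : dslope w 0 0 = c 1 := by simpa using (hp.coeff_zero 1).symm
  have hc2 : deriv (dslope w 0) 0 = c 2 := by simpa using hp.deriv
  have hc3 : deriv (dslope (dslope w 0) 0) 0 = c 3 := by
    simpa using hp.has_fpower_series_dslope_fslope.deriv
  obtain ⟨ζ, η, hη, h2, h3⟩ := exists_schur_parameters
    ((differentiableOn_dslope (ball_mem_nhds 0 one_pos)).mpr hw.1) hw.mapsTo_dslope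
  rw [← hc1, ← hc2, ← hc3, h2, h3]
  exact norm_functional_of_schur_parameters_le (mem_closedBall_zero_iff.mp
    (hw.mapsTo_dslope (mem_ball_self one_pos))) hη hσ hμ

theorem stmt_2 (w : ℂ → ℂ) (c : ℕ → ℂ) (σ μ : ℝ)
    (hw : IsSchwarz w) (hc0 : c 0 = 0)
    (hcsum : ∀ z ∈ ball (0:ℂ) 1, HasSum (fun n => c n * z ^ n) (w z))
    (hσ : |σ| ≤ 2) (hμ : 1 ≤ μ) :
    ‖c 3 + (σ : ℂ) * c 1 * c 2 + (μ : ℂ) * c 1 ^ 3‖ ≤ μ :=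
  stmt_2_general w c σ μ hw hcsum hσ hμ
end
end

section
/- Let f ∈ S*(φ) with φ(z) = 1 + B₁z + B₂z² + ..., B₁ > 0. If |B₂ - 2B₁²| ≥ B₁, then |Γ₁² - Γ₂²| ≤ B₁²/4 + (2B₁² - B₂)²/16, where Γ₁, Γ₂ are the first two logarithmic coefficients of the inverse function f⁻¹. The bound is sharp. -/
open Complex Metric

noncomputable section

/-!
Let `w` be the Schwarz function with `z f' = (φ ∘ w) f` and write `c₁ = w'(0)`, `c₂ = w''(0)`.
Comparing Taylor coefficients of both sides gives `a₂ = B₁ c₁` and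
`a₃ - (3/2) a₂² = ((B₂ - 2B₁²) c₁² + (B₁/2) c₂) / 2`, while
`Γ₁² - Γ₂² = (a₂² - (a₃ - (3/2) a₂²)²) / 4`.
The Schwarz lemma and the Schwarz–Pick lemma for `w(z)/z` give `|c₁| ≤ 1` and
`|c₂| ≤ 2 (1 - |c₁|²)`, so if `B₁ ≤ |B₂ - 2B₁²|` then `|a₃ - (3/2) a₂²| ≤ |B₂ - 2B₁²| / 2`, and the
triangle inequality yields the bound. It is attained for `w(z) = i z`, i.e. for
`f(z) = z exp ∫₀^z (φ(iζ) - 1) / ζ dζ`: there `a₂²` is a negative and `(a₃ - (3/2) a₂²)²` a positive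
real number, so the triangle inequality is an equality.
-/

open Filter Topology Set FormalMultilinearSeries ComplexConjugate
open scoped Nat

theorem hasFPowerSeriesOnBall_ofScalars_of_hasSum {f : ℂ → ℂ} {a : ℕ → ℂ}
    (h : ∀ z ∈ ball (0 : ℂ) 1, HasSum (fun n => a n * z ^ n) (f z)) :
    HasFPowerSeriesOnBall f (ofScalars ℂ a) 0 1 where
  r_le := by
    refine ENNReal.le_of_forall_nnreal_lt fun r hr => ?_
    have hr : ((r : ℝ) : ℂ) ∈ ball (0 : ℂ) 1 := by simpa using hr
    refine (ofScalars ℂ a).le_radius_of_tendsto (l := 0) ?_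
    simpa [ofScalars_norm, norm_mul] using
      (h _ hr).summable.tendsto_atTop_zero.norm
  r_pos := one_pos
  hasSum {y} hy := by
    rw [← ENNReal.coe_one, Metric.eball_coe, NNReal.coe_one] at hy
    simpa [ofScalars_apply_eq, mul_comm] using h y hy

theorem iteratedDeriv_eq_factorial_mul_of_hasSum {f : ℂ → ℂ} {a : ℕ → ℂ}
    (h : ∀ z ∈ ball (0 : ℂ) 1, HasSum (fun n => a n * z ^ n) (f z)) (n : ℕ) :
    iteratedDeriv n f 0 = n ! * a n := by
  have hp := hasFPowerSeriesOnBall_ofScalars_of_hasSum h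
  have ha := ofScalars_series_injective ℂ ℂ
    (hp.hasFPowerSeriesAt.eq_formalMultilinearSeries hp.analyticAt.hasFPowerSeriesAt)
  rw [congrFun ha n, mul_div_cancel₀]
  exact_mod_cast n.factorial_ne_zero

section

variable {𝕜 : Type*} [NontriviallyNormedField 𝕜] [CompleteSpace 𝕜]

theorem succ_mul_iteratedDeriv_succ_of_mul_deriv_eq {f p : 𝕜 → 𝕜} (hf : AnalyticAt 𝕜 f 0)
    (hp : AnalyticAt 𝕜 p 0) (h : (fun z => z * deriv f z) =ᶠ[𝓝 0] fun z => p z * f z) (k : ℕ) :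
    (k + 1) * iteratedDeriv (k + 1) f 0 =
      ∑ i ∈ Finset.range (k + 2), (k + 1).choose i * iteratedDeriv i p 0 *
        iteratedDeriv (k + 1 - i) f 0 := by
  rw [← iteratedDeriv_fun_mul hp.contDiffAt hf.contDiffAt, ← h.iteratedDeriv_eq,
    iteratedDeriv_fun_mul (f := fun z => z) analyticAt_id.contDiffAt hf.deriv.contDiffAt,
    Finset.sum_eq_single 1]
  · simp [iteratedDeriv_succ']
  · intro i _ hi
    simp [iteratedDeriv_fun_id_zero, hi]
  · simp

theorem deriv_deriv_comp {g w : 𝕜 → 𝕜} {c : 𝕜} (hg : AnalyticAt 𝕜 g (w c))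
    (hw : AnalyticAt 𝕜 w c) :
    deriv (deriv (g ∘ w)) c =
      deriv (deriv g) (w c) * deriv w c ^ 2 + deriv g (w c) * deriv (deriv w) c := by
  have hgw : ∀ᶠ z in 𝓝 c, AnalyticAt 𝕜 g (w z) :=
    hw.continuousAt.eventually hg.eventually_analyticAt
  have hderiv : deriv (g ∘ w) =ᶠ[𝓝 c] fun z => deriv g (w z) * deriv w z := by
    filter_upwards [hgw, hw.eventually_analyticAt] with z hgz hwz
    exact deriv_comp z hgz.differentiableAt hwz.differentiableAt
  rw [hderiv.deriv_eq]
  have := (hg.deriv.differentiableAt.hasDerivAt.comp c hw.differentiableAt.hasDerivAt).fun_mul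
    hw.deriv.differentiableAt.hasDerivAt
  refine this.deriv.trans ?_
  simp only [Function.comp_apply]
  ring

theorem deriv_deriv_eq_two_mul_deriv_dslope {f : 𝕜 → 𝕜} {c : 𝕜}
    (hg : AnalyticAt 𝕜 (dslope f c) c) :
    deriv (deriv f) c = 2 * deriv (dslope f c) c := by
  have hf : f = fun z => f c + (z - c) * dslope f c z := by
    funext z
    rw [← smul_eq_mul, sub_smul_dslope, add_sub_cancel]
  have hderiv : deriv f =ᶠ[𝓝 c] fun z => dslope f c z + (z - c) * deriv (dslope f c) z := by
    filter_upwards [hg.eventually_analyticAt] with z hz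
    have := (((hasDerivAt_id' z).sub_const c).fun_mul hz.differentiableAt.hasDerivAt).const_add
      (f c)
    rw [← hf] at this
    rw [this.deriv, one_mul]
  rw [hderiv.deriv_eq]
  have := hg.differentiableAt.hasDerivAt.fun_add
    (((hasDerivAt_id' c).sub_const c).fun_mul hg.deriv.differentiableAt.hasDerivAt)
  refine this.deriv.trans ?_
  ring

end

theorem normSq_one_sub_conj_mul_sub_normSq_sub (A b : ℂ) :
    normSq (1 - conj A * b) - normSq (A - b) = (1 - normSq A) * (1 - normSq b) := by
  simp only [normSq_apply, sub_re, sub_im, mul_re, mul_im, conj_re, conj_im, one_re, one_im]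
  ring

theorem norm_sub_le_norm_one_sub_conj_mul_s6 {A b : ℂ} (hA : ‖A‖ ≤ 1) (hb : ‖b‖ ≤ 1) :
    ‖A - b‖ ≤ ‖1 - conj A * b‖ := by
  rw [← sq_le_sq₀ (norm_nonneg _) (norm_nonneg _), ← normSq_eq_norm_sq, ← normSq_eq_norm_sq,
    ← sub_nonneg, normSq_one_sub_conj_mul_sub_normSq_sub, normSq_eq_norm_sq, normSq_eq_norm_sq]
  exact mul_nonneg (by nlinarith [norm_nonneg A]) (by nlinarith [norm_nonneg b])

theorem norm_deriv_le_one_sub_sq_of_mapsTo_of_norm_lt_one {g : ℂ → ℂ}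
    (hd : DifferentiableOn ℂ g (ball 0 1)) (hmaps : MapsTo g (ball 0 1) (closedBall 0 1))
    (hA : ‖g 0‖ < 1) : ‖deriv g 0‖ ≤ 1 - ‖g 0‖ ^ 2 := by
  have h0 : (0 : ℂ) ∈ ball (0 : ℂ) 1 := mem_ball_self one_pos
  have hg : HasDerivAt g (deriv g 0) 0 := (hd.differentiableAt (ball_mem_nhds _ one_pos)).hasDerivAt
  set A := g 0
  have hden : ∀ z ∈ ball (0 : ℂ) 1, 1 - conj A * g z ≠ 0 := by
    intro z hz hz0
    have : ‖conj A * g z‖ < 1 := by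
      rw [norm_mul, RCLike.norm_conj]
      exact mul_lt_one_of_nonneg_of_lt_one_left (norm_nonneg _) hA (by simpa using hmaps hz)
    rw [← sub_eq_zero.mp hz0, norm_one] at this
    exact this.false
  -- the disc automorphism exchanging `A` and `0`, composed with `g`, is a Schwarz function
  set h := fun z => (A - g z) / (1 - conj A * g z)
  have hhd : DifferentiableOn ℂ h (ball 0 1) :=
    ((differentiableOn_const A).sub hd).div
      ((differentiableOn_const 1).sub ((differentiableOn_const _).mul hd)) hden
  have hhmaps : MapsTo h (ball 0 1) (closedBall (h 0) 1) := by
    intro z hz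
    rw [mem_closedBall, show h 0 = 0 by simp [h, A], dist_zero_right, norm_div,
      div_le_one (norm_pos_iff.mpr (hden z hz))]
    exact norm_sub_le_norm_one_sub_conj_mul_s6 hA.le (by simpa using hmaps hz)
  have hconj : 1 - conj A * A = ((1 - ‖A‖ ^ 2 : ℝ) : ℂ) := by
    rw [conj_mul']
    push_cast
    ring
  have hpos : 0 < 1 - ‖A‖ ^ 2 := by nlinarith [norm_nonneg A]
  have hh : HasDerivAt h (-deriv g 0 / ((1 - ‖A‖ ^ 2 : ℝ) : ℂ)) 0 := by
    refine (((hasDerivAt_const 0 A).fun_sub hg).div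
      ((hasDerivAt_const 0 1).fun_sub (hg.const_mul (conj A))) (hden 0 h0)).congr_deriv ?_
    simp only [show g 0 = A from rfl, sub_self, zero_mul, sub_zero, zero_sub, hconj]
    field_simp [ofReal_ne_zero.mpr hpos.ne']
  have := Complex.norm_deriv_le_one_of_mapsTo_ball hhd hhmaps one_pos
  rwa [hh.deriv, norm_div, norm_neg, norm_real, Real.norm_of_nonneg hpos.le,
    div_le_one hpos] at this

theorem norm_deriv_le_one_sub_sq_of_mapsTo {g : ℂ → ℂ} (hd : DifferentiableOn ℂ g (ball 0 1))
    (hmaps : MapsTo g (ball 0 1) (closedBall 0 1)) : ‖deriv g 0‖ ≤ 1 - ‖g 0‖ ^ 2 := by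
  have hball : ball (0 : ℂ) 1 ∈ 𝓝 0 := ball_mem_nhds _ one_pos
  rcases (show ‖g 0‖ ≤ 1 by simpa using hmaps (mem_of_mem_nhds hball)).lt_or_eq with hA | hA
  · exact norm_deriv_le_one_sub_sq_of_mapsTo_of_norm_lt_one hd hmaps hA
  · have hmax : IsLocalMax (norm ∘ g) 0 :=
      mem_of_superset hball fun z hz => by simpa [← hA] using hmaps hz
    have hconst : g =ᶠ[𝓝 0] fun _ => g 0 := Complex.eventually_eq_of_isLocalMax_norm
      (eventually_of_mem hball fun z hz => hd.differentiableAt (isOpen_ball.mem_nhds hz)) hmax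
    rw [hconst.deriv_eq, deriv_const, hA]
    norm_num

theorem IsSchwarz.norm_deriv_le_one {w : ℂ → ℂ} (hw : IsSchwarz w) : ‖deriv w 0‖ ≤ 1 :=
  Complex.norm_deriv_le_one_of_mapsTo_ball hw.1
    (fun z hz => by rw [hw.2.1]; exact ball_subset_closedBall (hw.2.2 z hz)) one_pos

theorem IsSchwarz.norm_deriv_deriv_le {w : ℂ → ℂ} (hw : IsSchwarz w) :
    ‖deriv (deriv w) 0‖ ≤ 2 * (1 - ‖deriv w 0‖ ^ 2) := by
  obtain ⟨hd, h0, hmaps⟩ := hw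
  have hball : ball (0 : ℂ) 1 ∈ 𝓝 0 := ball_mem_nhds _ one_pos
  have hgd : DifferentiableOn ℂ (dslope w 0) (ball 0 1) :=
    (Complex.differentiableOn_dslope hball).mpr hd
  have hgmaps : MapsTo (dslope w 0) (ball 0 1) (closedBall 0 1) := fun z hz => by
    simpa using Complex.norm_dslope_le_div_of_mapsTo_ball hd
      (fun z hz => by rw [h0]; exact ball_subset_closedBall (hmaps z hz)) hz
  have := norm_deriv_le_one_sub_sq_of_mapsTo hgd hgmaps
  rw [dslope_same] at this
  rw [deriv_deriv_eq_two_mul_deriv_dslope (hgd.analyticAt hball), norm_mul]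
  norm_num
  linarith

theorem IsSchwarz.norm_mul_sq_add_le {w : ℂ → ℂ} (hw : IsSchwarz w) {β b : ℝ}
    (hb : |b| ≤ |β|) :
    ‖β * deriv w 0 ^ 2 + b / 2 * deriv (deriv w) 0‖ ≤ |β| := by
  have hc₁ := hw.norm_deriv_le_one
  have hc₂ := hw.norm_deriv_deriv_le
  calc ‖β * deriv w 0 ^ 2 + b / 2 * deriv (deriv w) 0‖
      ≤ |β| * ‖deriv w 0‖ ^ 2 + |b| / 2 * ‖deriv (deriv w) 0‖ := by
        refine (norm_add_le _ _).trans_eq ?_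
        simp
    _ ≤ |β| * ‖deriv w 0‖ ^ 2 + |β| * (1 - ‖deriv w 0‖ ^ 2) := by
        have : 0 ≤ 1 - ‖deriv w 0‖ ^ 2 := by nlinarith [norm_nonneg (deriv w 0)]
        nlinarith [abs_nonneg b, norm_nonneg (deriv (deriv w) 0)]
    _ = |β| := by ring

theorem isSchwarz_const_mul {c : ℂ} (hc : ‖c‖ ≤ 1) : IsSchwarz fun z => c * z := by
  refine ⟨(differentiable_id.const_mul c).differentiableOn, mul_zero c, fun z hz => ?_⟩
  simp only [mem_ball_zero_iff, norm_mul] at hz ⊢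
  exact (mul_le_of_le_one_left (norm_nonneg z) hc).trans_lt hz

theorem coeff_two_three_of_mul_deriv_eq_comp {phi f w : ℂ → ℂ} {B : ℕ → ℝ} {a : ℕ → ℂ}
    (hphi : ∀ z ∈ ball (0 : ℂ) 1, HasSum (fun n => (B n : ℂ) * z ^ n) (phi z))
    (hfa : InClassA f a) (hw : IsSchwarz w)
    (heq : ∀ z ∈ ball (0 : ℂ) 1, z * deriv f z = phi (w z) * f z) :
    a 2 = B 1 * deriv w 0 ∧
      a 3 - 3 / 2 * a 2 ^ 2 =
        (B 2 - 2 * B 1 ^ 2) / 2 * deriv w 0 ^ 2 + B 1 / 4 * deriv (deriv w) 0 := by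
  obtain ⟨ha0, ha1, hf⟩ := hfa
  have hball : ball (0 : ℂ) 1 ∈ 𝓝 0 := ball_mem_nhds _ one_pos
  have hfA := (hasFPowerSeriesOnBall_ofScalars_of_hasSum hf).analyticAt
  have hphiA : AnalyticAt ℂ phi (w 0) := by
    rw [hw.2.1]; exact (hasFPowerSeriesOnBall_ofScalars_of_hasSum hphi).analyticAt
  have hwA : AnalyticAt ℂ w 0 := hw.1.analyticAt hball
  have hrec := succ_mul_iteratedDeriv_succ_of_mul_deriv_eq hfA (hphiA.comp hwA)
    (eventually_of_mem hball heq)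
  have hf' := iteratedDeriv_eq_factorial_mul_of_hasSum hf
  have hphi1 : deriv phi 0 = B 1 := by simpa using iteratedDeriv_eq_factorial_mul_of_hasSum hphi 1
  have hphi2 : deriv (deriv phi) 0 = 2 * B 2 := by
    simpa [iteratedDeriv_succ] using iteratedDeriv_eq_factorial_mul_of_hasSum hphi 2
  have hp1 : iteratedDeriv 1 (phi ∘ w) 0 = B 1 * deriv w 0 := by
    rw [iteratedDeriv_one, deriv_comp _ hphiA.differentiableAt hwA.differentiableAt, hw.2.1,
      hphi1]
  have hp2 : iteratedDeriv 2 (phi ∘ w) 0 =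
      2 * B 2 * deriv w 0 ^ 2 + B 1 * deriv (deriv w) 0 := by
    rw [iteratedDeriv_succ, iteratedDeriv_one, deriv_deriv_comp hphiA hwA, hw.2.1, hphi1, hphi2]
  have r0 := hrec 0
  have r1 := hrec 1
  have r2 := hrec 2
  simp only [Finset.sum_range_succ, Finset.sum_range_zero, hf', hp1, hp2] at r0 r1 r2
  norm_num [ha0, ha1] at r0 r1 r2
  have ha2 : a 2 = B 1 * deriv w 0 := by linear_combination (r1 - 2 * a 2 * r0) / 2
  refine ⟨ha2, ?_⟩
  linear_combination (r2 - 6 * a 3 * r0) / 12 - (3 / 2 * a 2 + B 1 * deriv w 0) * ha2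

theorem exists_mul_deriv_eq_comp_const_mul {phi : ℂ → ℂ}
    (hphi : DifferentiableOn ℂ phi (ball 0 1)) (hphi0 : phi 0 = 1) {c : ℂ} (hc : ‖c‖ ≤ 1) :
    ∃ f, DifferentiableOn ℂ f (ball 0 1) ∧ f 0 = 0 ∧ deriv f 0 = 1 ∧
      ∀ z ∈ ball (0 : ℂ) 1, z * deriv f z = phi (c * z) * f z := by
  obtain ⟨hw, -, hmaps⟩ := isSchwarz_const_mul hc
  set q := dslope (fun z => phi (c * z)) 0
  have hq : DifferentiableOn ℂ q (ball 0 1) :=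
    (Complex.differentiableOn_dslope (ball_mem_nhds _ one_pos)).mpr (hphi.comp hw hmaps)
  -- `f = z exp H` with `H' = (phi (c z) - 1) / z` solves `z f' = phi (c z) f`
  obtain ⟨H, hH0, hH⟩ := hq.isExactOn_ball.with_val_at 0 0
  have hf : ∀ z ∈ ball (0 : ℂ) 1,
      HasDerivAt (fun z => z * exp (H z)) (1 * exp (H z) + z * (exp (H z) * q z)) z :=
    fun z hz => (hasDerivAt_id' z).fun_mul ((hH z hz).cexp)
  refine ⟨fun z => z * exp (H z), fun z hz => (hf z hz).differentiableAt.differentiableWithinAt,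
    zero_mul _, by simp [(hf 0 (mem_ball_self one_pos)).deriv, hH0], fun z hz => ?_⟩
  have hzq : z * q z = phi (c * z) - 1 := by
    simpa [hphi0] using sub_smul_dslope (fun z => phi (c * z)) 0 z
  rw [(hf z hz).deriv]
  linear_combination exp (H z) * z * hzq

theorem inClassA_iteratedDeriv_div_factorial {f : ℂ → ℂ}
    (hf : DifferentiableOn ℂ f (ball 0 1)) (hf0 : f 0 = 0) (hf1 : deriv f 0 = 1) :
    InClassA f fun n => iteratedDeriv n f 0 / n ! := by
  refine ⟨by simp [hf0], by simp [hf1], fun z hz => ?_⟩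
  have hterm : (fun n : ℕ => (n ! : ℂ)⁻¹ • (z - 0) ^ n • iteratedDeriv n f 0) =
      fun n => iteratedDeriv n f 0 / n ! * z ^ n := by
    funext n
    simp only [sub_zero, smul_eq_mul]
    ring
  exact hterm ▸ Complex.hasSum_taylorSeries_on_ball hf hz

theorem G₁_sq_sub_G₂_sq (a : ℕ → ℂ) :
    G₁ a ^ 2 - G₂ a ^ 2 = (a 2 ^ 2 - (a 3 - 3 / 2 * a 2 ^ 2) ^ 2) / 4 := by
  rw [G₁, G₂]
  ring

theorem norm_G₁_sq_sub_G₂_sq_le {phi f : ℂ → ℂ} {B : ℕ → ℝ} {a : ℕ → ℂ}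
    (hphi : ∀ z ∈ ball (0 : ℂ) 1, HasSum (fun n => (B n : ℂ) * z ^ n) (phi z))
    (hB1 : 0 ≤ B 1) (hcond : B 1 ≤ |B 2 - 2 * B 1 ^ 2|) (hfa : InClassA f a)
    (hf : MemStarPhi phi f) :
    ‖G₁ a ^ 2 - G₂ a ^ 2‖ ≤ B 1 ^ 2 / 4 + (2 * B 1 ^ 2 - B 2) ^ 2 / 16 := by
  obtain ⟨w, hw, heq⟩ := hf
  obtain ⟨ha2, ha3⟩ := coeff_two_three_of_mul_deriv_eq_comp hphi hfa hw heq
  have h2 : ‖a 2‖ ≤ B 1 := by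
    rw [ha2, norm_mul, norm_real, Real.norm_of_nonneg hB1]
    exact mul_le_of_le_one_right hB1 hw.norm_deriv_le_one
  have h3 : ‖a 3 - 3 / 2 * a 2 ^ 2‖ ≤ |B 2 - 2 * B 1 ^ 2| / 2 := by
    have := hw.norm_mul_sq_add_le (β := B 2 - 2 * B 1 ^ 2) (b := B 1) (by rwa [abs_of_nonneg hB1])
    rw [ha3, show ((B 2 : ℂ) - 2 * B 1 ^ 2) / 2 * deriv w 0 ^ 2 + B 1 / 4 * deriv (deriv w) 0
      = ((B 2 - 2 * B 1 ^ 2 : ℝ) * deriv w 0 ^ 2 + (B 1 : ℝ) / 2 * deriv (deriv w) 0) / 2 by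
        push_cast; ring, norm_div, RCLike.norm_ofNat]
    gcongr
  calc ‖G₁ a ^ 2 - G₂ a ^ 2‖ ≤ (‖a 2‖ ^ 2 + ‖a 3 - 3 / 2 * a 2 ^ 2‖ ^ 2) / 4 := by
        rw [G₁_sq_sub_G₂_sq, norm_div, RCLike.norm_ofNat, ← norm_pow, ← norm_pow]
        gcongr
        exact norm_sub_le _ _
    _ ≤ (B 1 ^ 2 + (|B 2 - 2 * B 1 ^ 2| / 2) ^ 2) / 4 := by gcongr
    _ = B 1 ^ 2 / 4 + (2 * B 1 ^ 2 - B 2) ^ 2 / 16 := by rw [div_pow, sq_abs]; ring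

theorem exists_norm_G₁_sq_sub_G₂_sq_eq {phi : ℂ → ℂ} {B : ℕ → ℝ}
    (hphiD : DifferentiableOn ℂ phi (ball 0 1))
    (hphi : ∀ z ∈ ball (0 : ℂ) 1, HasSum (fun n => (B n : ℂ) * z ^ n) (phi z)) (hB0 : B 0 = 1) :
    ∃ f a, InClassA f a ∧ MemStarPhi phi f ∧
      ‖G₁ a ^ 2 - G₂ a ^ 2‖ = B 1 ^ 2 / 4 + (2 * B 1 ^ 2 - B 2) ^ 2 / 16 := by
  have hphi0 : phi 0 = 1 := by
    simpa [hB0] using iteratedDeriv_eq_factorial_mul_of_hasSum hphi 0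
  obtain ⟨f, hfD, hf0, hf1, heq⟩ :=
    exists_mul_deriv_eq_comp_const_mul hphiD hphi0 (c := I) (by simp)
  have hfa := inClassA_iteratedDeriv_div_factorial hfD hf0 hf1
  generalize (fun n => iteratedDeriv n f 0 / n !) = a at hfa
  have hw := isSchwarz_const_mul (c := I) (by simp)
  refine ⟨f, a, hfa, ⟨_, hw, heq⟩, ?_⟩
  obtain ⟨ha2, ha3⟩ := coeff_two_three_of_mul_deriv_eq_comp hphi hfa hw heq
  have hdw : deriv (fun z => I * z) = fun _ => I :=
    funext fun z => by simp [((hasDerivAt_id' z).const_mul I).deriv]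
  simp only [hdw, deriv_const, mul_zero, add_zero] at ha2 ha3
  have hval : G₁ a ^ 2 - G₂ a ^ 2 = -((B 1 ^ 2 / 4 + (2 * B 1 ^ 2 - B 2) ^ 2 / 16 : ℝ) : ℂ) := by
    rw [G₁_sq_sub_G₂_sq, ha3, ha2]
    push_cast
    linear_combination (B 1 ^ 2 / 4 - (B 2 - 2 * B 1 ^ 2) ^ 2 / 16 * (I ^ 2 - 1)) * I_sq
  rw [hval, norm_neg, norm_real, Real.norm_of_nonneg (by positivity)]

theorem stmt_6 (phi : ℂ → ℂ) (B : ℕ → ℝ)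
    (hphi : IsMaMinda phi B)
    (hcond : B 1 ≤ |B 2 - 2 * B 1 ^ 2|) :
    (∀ f a, InClassA f a → MemStarPhi phi f →
      ‖G₁ a ^ 2 - G₂ a ^ 2‖ ≤ B 1 ^ 2 / 4 + (2 * B 1 ^ 2 - B 2) ^ 2 / 16) ∧
    ∃ f a, InClassA f a ∧ MemStarPhi phi f ∧
      ‖G₁ a ^ 2 - G₂ a ^ 2‖ = B 1 ^ 2 / 4 + (2 * B 1 ^ 2 - B 2) ^ 2 / 16 := by
  obtain ⟨hphiD, -, hphiS, hB0, hB1, -⟩ := hphi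
  exact ⟨fun f a hfa hf => norm_G₁_sq_sub_G₂_sq_le hphiS hB1.le hcond hfa hf,
    exists_norm_G₁_sq_sub_G₂_sq_eq hphiD hphiS hB0⟩
end
end
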